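/- Let agents have {−1,0,c}-additive valuations, c a positive integer. Let Y be a leximin allocation for the auxiliary instance in which all n agents share agent i's valuation v_i, chosen to be dominating (not dominated by any other leximin allocation for that instance), and suppose Y is sorted so that agent n has minimal utility. Let N' = {j : |Y^c_j| = |Y^c_n| + 1} and let ℓ be the number of items agent i values at −1. Then |Y^{−1}_n| = max{⌈(ℓ − c|N'|)/n⌉, 0}, and hence the maxmin share of agent i satisfies MMS_i ≤ c|Y^c_n| − max{⌈(ℓ − c|N'|)/n⌉, 0}. -/

import Mathlib

open Finset

/-- Additive utility of a bundle given per-item values. -/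
def util {α : Type*} [DecidableEq α] (w : α → ℤ) (S : Finset α) : ℤ := ∑ o ∈ S, w o

/-- A complete allocation: bundles are pairwise disjoint and cover all items. -/
def CompleteAlloc {α : Type*} [Fintype α] [DecidableEq α] {n : ℕ}
    (X : Fin n → Finset α) : Prop :=
  (∀ i j : Fin n, i ≠ j → Disjoint (X i) (X j)) ∧ Finset.univ.biUnion X = Finset.univ

/-- The items of `Y i` valued at `c` by the common valuation `w`. -/
def cPart {α : Type*} [DecidableEq α] {n : ℕ} (w : α → ℤ) (c : ℕ)
    (Y : Fin n → Finset α) (i : Fin n) : Finset α :=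
  (Y i).filter fun o => w o = (c : ℤ)

/-- The items of `Y i` valued at `-1` by the common valuation `w`. -/
def mPart {α : Type*} [DecidableEq α] {n : ℕ} (w : α → ℤ)
    (Y : Fin n → Finset α) (i : Fin n) : Finset α :=
  (Y i).filter fun o => w o = -1

/-- The ascending-sorted utility vector, all agents sharing valuation `w`. -/
noncomputable def sUtil {α : Type*} [Fintype α] [DecidableEq α] {n : ℕ}
    (w : α → ℤ) (Y : Fin n → Finset α) : List ℤ :=
  Multiset.sort (Multiset.map (fun i => util w (Y i)) Finset.univ.val) (· ≤ ·)

/-- Leximin for the auxiliary instance in which all agents share valuation `w`. -/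
def LeximinAux {α : Type*} [Fintype α] [DecidableEq α] {n : ℕ}
    (w : α → ℤ) (Y : Fin n → Finset α) : Prop :=
  CompleteAlloc Y ∧ ∀ Z : Fin n → Finset α, CompleteAlloc Z →
    ¬ List.Lex (· < ·) (sUtil w Y) (sUtil w Z)

/-- The ascending-sorted utility vector of the `c`-part allocation `Y^c`. -/
noncomputable def sC {α : Type*} [Fintype α] [DecidableEq α] {n : ℕ}
    (w : α → ℤ) (c : ℕ) (Y : Fin n → Finset α) : List ℤ :=
  Multiset.sort
    (Multiset.map (fun i => (c : ℤ) * (cPart w c Y i).card) Finset.univ.val) (· ≤ ·)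

/-- The (unsorted) utility vector of the `c`-part allocation `Y^c`. -/
def vecC {α : Type*} [DecidableEq α] {n : ℕ}
    (w : α → ℤ) (c : ℕ) (Y : Fin n → Finset α) : List ℤ :=
  List.ofFn fun i => (c : ℤ) * (cPart w c Y i).card

/-- The (unsorted) full utility vector. -/
def uVec {α : Type*} [DecidableEq α] {n : ℕ}
    (w : α → ℤ) (Y : Fin n → Finset α) : List ℤ :=
  List.ofFn fun i => util w (Y i)

/-- `Z` dominates `Y` (Definition of domination for comparing leximin allocations). -/
noncomputable def Dominates {α : Type*} [Fintype α] [DecidableEq α] {n : ℕ}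
    (w : α → ℤ) (c : ℕ) (Z Y : Fin n → Finset α) : Prop :=
  List.Lex (· < ·) (sC w c Y) (sC w c Z) ∨
  (sC w c Z = sC w c Y ∧ List.Lex (· < ·) (vecC w c Y) (vecC w c Z)) ∨
  (vecC w c Z = vecC w c Y ∧ List.Lex (· < ·) (uVec w Y) (uVec w Z))


/-! Write `a_j = |Y^c_j|` and `m_j = |Y^{-1}_j|`, so `v(Y_j) = c a_j - m_j`. Moving a single item
to or from the minimal bundle `Y_n` never raises the minimum of a leximin allocation; moving one
`c`-item together with `c` items of value `-1` keeps every utility, so it yields another leximin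
allocation, which must not dominate `Y`. The first exchange gives `v(Y_j) ≤ v(Y_n) + 1` once
`m_n ≥ 1`; both together force `a_j ∈ {a_n, a_n + 1}`. So the deficits
`c a_n - v(Y_j) = m_j - c [j ∈ N']` lie in `{m_n - 1, m_n}` and sum to `ℓ - c |N'|`, which pins
`m_n` as their rounded-up average. Finally `MMS_i ≤ v(Y_n)`, as no complete allocation gives every
bundle more than the leximin minimum. -/

section SortedLex

variable {β : Type*} [LinearOrder β]

theorem List.lex_lt_of_count_lt {s t : List β} (hs : s.Pairwise (· ≤ ·))
    (ht : t.Pairwise (· ≤ ·)) (hlen : s.length = t.length) {x : β}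
    (hbelow : ∀ z < x, s.count z = t.count z) (hx : t.count x < s.count x) :
    List.Lex (· < ·) s t := by
  induction s generalizing t with
  | nil => simp at hx
  | cons a s ih =>
    obtain _ | ⟨b, t⟩ := t
    · simp at hlen
    rcases lt_trichotomy a b with hab | rfl | hab
    · exact .rel hab
    · refine .cons (ih hs.of_cons ht.of_cons (by simpa using hlen) (fun z hz => ?_) ?_)
      · simpa [List.count_cons] using hbelow z hz
      · simpa [List.count_cons] using hx
    · have hge : ∀ z ∈ a :: s, a ≤ z := by
        intro z hz
        rcases List.mem_cons.1 hz with rfl | hz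
        · exact le_rfl
        · exact List.rel_of_pairwise_cons hs hz
      have hcount : ∀ z ≤ b, (a :: s).count z = 0 := fun z hz =>
        List.count_eq_zero.2 fun h => (hge z h).not_gt (hz.trans_lt hab)
      rcases lt_or_ge b x with hbx | hxb
      · simpa [hcount b le_rfl] using hbelow b hbx
      · simp [hcount x hxb] at hx

theorem Multiset.sort_lex_of_count_lt {M M' : Multiset β}
    (hcard : Multiset.card M = Multiset.card M') {x : β}
    (hbelow : ∀ z < x, M.count z = M'.count z) (hx : M'.count x < M.count x) :
    List.Lex (· < ·) (M.sort (· ≤ ·)) (M'.sort (· ≤ ·)) := by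
  refine List.lex_lt_of_count_lt (Multiset.pairwise_sort _ _) (Multiset.pairwise_sort _ _)
    (by simp [hcard]) (x := x) (fun z hz => ?_) ?_
  all_goals simp only [← Multiset.coe_count, Multiset.sort_eq]
  exacts [hbelow z hz, hx]

theorem sort_map_lex_of_ne_imp_lt {ι : Type*} [Fintype ι] {f f' : ι → β} {x : β}
    (hne : ∀ i, f' i ≠ f i → x ≤ f i ∧ x < f' i) {j : ι} (hj : f j = x) (hj' : x < f' j) :
    List.Lex (· < ·) ((Finset.univ.val.map f).sort (· ≤ ·))
      ((Finset.univ.val.map f').sort (· ≤ ·)) := by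
  classical
  have hcount : ∀ (g : ι → β) z, (Finset.univ.val.map g).count z = #{i | g i = z} := by
    intro g z
    simp [Multiset.count_map, Finset.card, Finset.filter_val, eq_comm]
  refine Multiset.sort_lex_of_count_lt (by simp) (x := x) (fun z hz => ?_) ?_
  · rw [hcount, hcount]
    congr 1
    ext i
    by_cases h : f' i = f i
    · simp [h]
    · have := hne i h
      simp only [Finset.mem_filter, Finset.mem_univ, true_and]
      constructor <;> rintro rfl <;> order
  · rw [hcount, hcount]
    refine Finset.card_lt_card <|
      (Finset.ssubset_iff_of_subset fun i hi => ?_).2 ⟨j, by simp [hj], by simp [hj'.ne']⟩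
    simp only [Finset.mem_filter, Finset.mem_univ, true_and] at hi ⊢
    by_contra h
    exact (hne i (by rw [hi]; exact Ne.symm h)).2.ne' hi

end SortedLex

theorem List.lex_ofFn_of_lt {β : Type*} [LT β] {n : ℕ} {f g : Fin n → β} (j : Fin n)
    (hlt : f j < g j) (heq : ∀ i < j, f i = g i) :
    List.Lex (· < ·) (List.ofFn f) (List.ofFn g) :=
  List.lt_iff_exists.2 <| .inr ⟨j, by simp, by simp, fun i hi => by
    simpa using heq ⟨i, by omega⟩ (Fin.mk_lt_of_lt_val hi), by simpa using hlt⟩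

section Transfer

variable {α : Type*} [DecidableEq α] {n : ℕ}

theorem completeAlloc_iff [Fintype α] {X : Fin n → Finset α} :
    CompleteAlloc X ↔ ∀ o, ∃! i, o ∈ X i := by
  refine ⟨fun ⟨hdisj, hcover⟩ o => ?_, fun h => ⟨fun i j hij => ?_, ?_⟩⟩
  · obtain ⟨i, -, hi⟩ := Finset.mem_biUnion.1 (hcover ▸ Finset.mem_univ o)
    refine ⟨i, hi, fun j hj => ?_⟩
    by_contra hji
    exact Finset.disjoint_left.1 (hdisj j i hji) hj hi
  · exact Finset.disjoint_left.2 fun o hi hj => hij ((h o).unique hi hj)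
  · exact Finset.eq_univ_of_forall fun o =>
      Finset.mem_biUnion.2 ⟨_, Finset.mem_univ _, (h o).exists.choose_spec⟩

def transfer (Y : Fin n → Finset α) (s r : Fin n) (T : Finset α) : Fin n → Finset α :=
  Function.update (Function.update Y s (Y s \ T)) r (Y r ∪ T)

variable {Y : Fin n → Finset α} {s r : Fin n} {T : Finset α}

theorem transfer_apply_source (hsr : s ≠ r) : transfer Y s r T s = Y s \ T := by
  simp [transfer, hsr]

theorem transfer_apply_target : transfer Y s r T r = Y r ∪ T := by
  simp [transfer]

theorem transfer_apply_of_ne {i : Fin n} (his : i ≠ s) (hir : i ≠ r) :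
    transfer Y s r T i = Y i := by
  simp [transfer, his, hir]

theorem mem_transfer_of_notMem {o : α} (ho : o ∉ T) (i : Fin n) :
    o ∈ transfer Y s r T i ↔ o ∈ Y i := by
  unfold transfer
  rcases eq_or_ne i r with rfl | hir
  · simp [ho]
  rcases eq_or_ne i s with rfl | his
  · simp [hir, ho]
  · simp [hir, his]

theorem completeAlloc_transfer [Fintype α] (hY : CompleteAlloc Y) (hsr : s ≠ r) (hT : T ⊆ Y s) :
    CompleteAlloc (transfer Y s r T) := by
  rw [completeAlloc_iff] at hY ⊢
  intro o
  by_cases ho : o ∈ T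
  · refine ⟨r, by simp [transfer_apply_target, ho], fun i (hi : o ∈ transfer Y s r T i) => ?_⟩
    by_contra hir
    rcases eq_or_ne i s with rfl | his
    · simp [transfer_apply_source hsr, ho] at hi
    · rw [transfer_apply_of_ne his hir] at hi
      exact his ((hY o).unique hi (hT ho))
  · simpa only [mem_transfer_of_notMem ho] using hY o

theorem sum_transfer_source_add {M : Type*} [AddCommMonoid M] (f : α → M) (hsr : s ≠ r)
    (hT : T ⊆ Y s) : ∑ o ∈ transfer Y s r T s, f o + ∑ o ∈ T, f o = ∑ o ∈ Y s, f o := by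
  rw [transfer_apply_source hsr, Finset.sum_sdiff hT]

theorem sum_transfer_target {M : Type*} [AddCommMonoid M] (f : α → M) (hd : Disjoint (Y r) T) :
    ∑ o ∈ transfer Y s r T r, f o = ∑ o ∈ Y r, f o + ∑ o ∈ T, f o := by
  rw [transfer_apply_target, Finset.sum_union hd]

theorem util_transfer_source {w : α → ℤ} (hsr : s ≠ r) (hT : T ⊆ Y s) :
    util w (transfer Y s r T s) = util w (Y s) - util w T :=
  eq_sub_of_add_eq (sum_transfer_source_add w hsr hT)

theorem util_transfer_target {w : α → ℤ} (hd : Disjoint (Y r) T) :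
    util w (transfer Y s r T r) = util w (Y r) + util w T :=
  sum_transfer_target w hd

end Transfer

section Valuation

variable {α : Type*} [DecidableEq α] {n : ℕ} {w : α → ℤ} {c : ℕ}

theorem util_eq_cPart_sub_mPart (hw : ∀ o, w o ∈ ({-1, 0, (c : ℤ)} : Set ℤ))
    (Y : Fin n → Finset α) (i : Fin n) :
    util w (Y i) = c * (cPart w c Y i).card - (mPart w Y i).card := by
  have hpt : ∀ o, w o = c * (if w o = c then 1 else 0) - (if w o = -1 then 1 else 0) := by
    intro o
    have := hw o
    simp only [Set.mem_insert_iff, Set.mem_singleton_iff] at this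
    rcases this with h | h | h <;> simp [h]
  rw [util, Finset.sum_congr rfl fun o _ => hpt o, Finset.sum_sub_distrib, ← Finset.mul_sum,
    cPart, mPart, Finset.natCast_card_filter, Finset.natCast_card_filter]

end Valuation

section Balanced

variable {α : Type*} [DecidableEq α] {n : ℕ} {w : α → ℤ} {c : ℕ} {Y : Fin n → Finset α}
  {s r : Fin n}

theorem exists_balanced_transfer [Fintype α] (hY : CompleteAlloc Y) (hsr : s ≠ r)
    (hs : (cPart w c Y s).Nonempty) (hm : c ≤ (mPart w Y s).card) :
    ∃ Z : Fin n → Finset α, CompleteAlloc Z ∧ (∀ i, util w (Z i) = util w (Y i)) ∧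
      (cPart w c Z s).card + 1 = (cPart w c Y s).card ∧
      (cPart w c Z r).card = (cPart w c Y r).card + 1 ∧
      ∀ i, i ≠ s → i ≠ r → cPart w c Z i = cPart w c Y i := by
  obtain ⟨o, ho⟩ := hs
  obtain ⟨hoY, hwo⟩ := Finset.mem_filter.1 ho
  obtain ⟨D, hDm, hDc⟩ := Finset.exists_subset_card_eq hm
  have hwD : ∀ x ∈ D, w x = -1 := fun x hx => (Finset.mem_filter.1 (hDm hx)).2
  have hoD : o ∉ D := fun h => by have := hwD o h; omega
  set T := insert o D
  have hTY : T ⊆ Y s := Finset.insert_subset hoY (hDm.trans (Finset.filter_subset _ _))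
  have hTr : Disjoint (Y r) T := (hY.1 s r hsr).symm.mono_right hTY
  have hTutil : util w T = 0 := by
    rw [util, Finset.sum_insert hoD, hwo, Finset.sum_congr rfl hwD]
    simp [hDc]
  have hTc : #(T.filter (w · = c)) = 1 := by
    rw [Finset.filter_insert, if_pos hwo,
      Finset.filter_false_of_mem fun x hx => by simp [hwD x hx]]
    rfl
  have hcard_source :=
    sum_transfer_source_add (r := r) (fun o => if w o = c then 1 else 0) hsr hTY
  have hcard_target := sum_transfer_target (s := s) (fun o => if w o = c then 1 else 0) hTr
  simp only [← Finset.card_filter, hTc] at hcard_source hcard_target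
  refine ⟨transfer Y s r T, completeAlloc_transfer hY hsr hTY, fun i => ?_, hcard_source,
    hcard_target, fun i his hir => by rw [cPart, cPart, transfer_apply_of_ne his hir]⟩
  rcases eq_or_ne i s with rfl | his
  · rw [util_transfer_source hsr hTY, hTutil, sub_zero]
  rcases eq_or_ne i r with rfl | hir
  · rw [util_transfer_target hTr, hTutil, add_zero]
  · rw [transfer_apply_of_ne his hir]

end Balanced

section Leximin

variable {α : Type*} [Fintype α] [DecidableEq α] {n : ℕ} {w : α → ℤ} {Y Z : Fin n → Finset α}
  {k s r : Fin n}

theorem LeximinAux.of_util_eq (hY : LeximinAux w Y) (hZ : CompleteAlloc Z)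
    (h : ∀ i, util w (Z i) = util w (Y i)) : LeximinAux w Z := by
  have : sUtil w Z = sUtil w Y := by simp only [sUtil, h]
  exact ⟨hZ, this ▸ hY.2⟩

theorem LeximinAux.util_eq_of_ne_imp_lt (hY : LeximinAux w Y)
    (hmin : ∀ j, util w (Y k) ≤ util w (Y j)) (hZ : CompleteAlloc Z)
    (hne : ∀ i, util w (Z i) ≠ util w (Y i) → util w (Y k) < util w (Z i)) :
    util w (Z k) = util w (Y k) := by
  by_contra hk
  exact hY.2 Z hZ (sort_map_lex_of_ne_imp_lt (fun i hi => ⟨hmin i, hne i hi⟩) rfl (hne k hk))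

theorem LeximinAux.exists_util_le (hY : LeximinAux w Y)
    (hmin : ∀ j, util w (Y k) ≤ util w (Y j)) (hZ : CompleteAlloc Z) :
    ∃ j, util w (Z j) ≤ util w (Y k) := by
  by_contra! h
  exact (h k).ne' (hY.util_eq_of_ne_imp_lt hmin hZ fun i _ => h i)

theorem LeximinAux.min_util_transfer_singleton_le (hY : LeximinAux w Y)
    (hmin : ∀ j, util w (Y k) ≤ util w (Y j)) (hsr : s ≠ r) (hk : k = s ∨ k = r) {o : α}
    (ho : o ∈ Y s) : min (util w (Y s) - w o) (util w (Y r) + w o) ≤ util w (Y k) := by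
  by_contra! h
  rw [lt_min_iff] at h
  have hT : {o} ⊆ Y s := Finset.singleton_subset_iff.2 ho
  have hs := util_transfer_source (w := w) hsr hT
  have hr := util_transfer_target (w := w) (s := s)
    (Finset.disjoint_singleton_right.2 (Finset.disjoint_left.1 (hY.1.1 s r hsr) ho))
  rw [show util w {o} = w o from Finset.sum_singleton w o] at hs hr
  have hne : ∀ i, util w (transfer Y s r {o} i) ≠ util w (Y i) →
      util w (Y k) < util w (transfer Y s r {o} i) := by
    intro i hi
    rcases eq_or_ne i s with rfl | his
    · exact hs ▸ h.1
    rcases eq_or_ne i r with rfl | hir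
    · exact hr ▸ h.2
    · exact absurd (by rw [transfer_apply_of_ne his hir]) hi
  have hkeq := hY.util_eq_of_ne_imp_lt hmin (completeAlloc_transfer hY.1 hsr hT) hne
  rcases hk with rfl | rfl
  · linarith [h.1]
  · linarith [h.2]

theorem LeximinAux.util_le_add_one (hY : LeximinAux w Y)
    (hmin : ∀ j, util w (Y k) ≤ util w (Y j)) (hm : (mPart w Y k).Nonempty) (j : Fin n) :
    util w (Y j) ≤ util w (Y k) + 1 := by
  obtain ⟨o, ho⟩ := hm
  obtain ⟨hoY, hwo⟩ := Finset.mem_filter.1 ho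
  rcases eq_or_ne k j with rfl | hkj
  · linarith
  have := hY.min_util_transfer_singleton_le hmin hkj (.inl rfl) hoY
  rw [hwo, min_le_iff] at this
  omega

end Leximin

section Dominating

variable {α : Type*} [Fintype α] [DecidableEq α] {n : ℕ} {w : α → ℤ} {c : ℕ}
  {Y Z : Fin n → Finset α} {k s r : Fin n}

theorem dominates_of_cPart_card_shift (hc : 0 < c) (hsr : s ≠ r)
    (hs : (cPart w c Z s).card + 1 = (cPart w c Y s).card)
    (hr : (cPart w c Z r).card = (cPart w c Y r).card + 1)
    (hother : ∀ i, i ≠ s → i ≠ r → cPart w c Z i = cPart w c Y i)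
    (hlt : (cPart w c Y r).card + 1 < (cPart w c Y s).card ∨
      ((cPart w c Y r).card + 1 = (cPart w c Y s).card ∧ r < s)) :
    Dominates w c Z Y := by
  have hmul : ∀ a b : ℕ, a < b → (c : ℤ) * a < c * b := fun a b h =>
    mul_lt_mul_of_pos_left (by exact_mod_cast h) (by exact_mod_cast hc)
  rcases hlt with hlt | ⟨heq, hrs⟩
  · refine .inl (sort_map_lex_of_ne_imp_lt (j := r) (fun i hi => ?_) rfl (hmul _ _ (by omega)))
    rcases eq_or_ne i s with rfl | his
    · exact ⟨(hmul _ _ (by omega)).le, hmul _ _ (by omega)⟩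
    rcases eq_or_ne i r with rfl | hir
    · exact ⟨le_rfl, hmul _ _ (by omega)⟩
    · exact absurd (by rw [hother i his hir]) hi
  -- the shift merely swaps the counts of `r` and `s`, so only the unsorted vector sees it
  · refine .inr (.inl ⟨?_, List.lex_ofFn_of_lt r (hmul _ _ (by omega)) fun i hi => ?_⟩)
    · have hswap : (fun i => (c : ℤ) * (cPart w c Z i).card) =
          (fun i => (c : ℤ) * (cPart w c Y i).card) ∘ Equiv.swap r s := by
        funext i
        rcases eq_or_ne i s with rfl | his
        · simp only [Function.comp_apply, Equiv.swap_apply_right]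
          congr 2
          omega
        rcases eq_or_ne i r with rfl | hir
        · simp only [Function.comp_apply, Equiv.swap_apply_left, hr, ← heq]
        · simp only [Function.comp_apply, Equiv.swap_apply_of_ne_of_ne hir his, hother i his hir]
      rw [sC, sC, hswap, ← Multiset.map_map, Multiset.map_univ_val_equiv]
    · rw [hother i (hi.trans hrs).ne hi.ne]

theorem LeximinAux.cPart_card_le_of_le_card_mPart (hY : LeximinAux w Y)
    (hdom : ∀ Z, LeximinAux w Z → ¬ Dominates w c Z Y) (hc : 0 < c) (hsr : s ≠ r)
    (hs : (cPart w c Y s).Nonempty) (hm : c ≤ (mPart w Y s).card) :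
    (cPart w c Y s).card ≤ (cPart w c Y r).card ∨
      ((cPart w c Y s).card = (cPart w c Y r).card + 1 ∧ s < r) := by
  obtain ⟨Z, hZ, hutil, hZs, hZr, hother⟩ := exists_balanced_transfer hY.1 hsr hs hm
  by_contra! h
  refine hdom Z (hY.of_util_eq hZ hutil) (dominates_of_cPart_card_shift hc hsr hZs hZr hother ?_)
  rcases lt_or_eq_of_le (Nat.succ_le_of_lt h.1) with hlt | heq
  · exact .inl hlt
  · exact .inr ⟨heq, lt_of_le_of_ne (h.2 heq.symm) hsr.symm⟩

theorem LeximinAux.cPart_card_le_succ (hY : LeximinAux w Y)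
    (hdom : ∀ Z, LeximinAux w Z → ¬ Dominates w c Z Y) (hc : 0 < c)
    (hw : ∀ o, w o ∈ ({-1, 0, (c : ℤ)} : Set ℤ)) (hmin : ∀ j, util w (Y k) ≤ util w (Y j))
    (j : Fin n) : (cPart w c Y j).card ≤ (cPart w c Y k).card + 1 := by
  by_contra! h
  have hjk : j ≠ k := by rintro rfl; omega
  obtain ⟨o, ho⟩ : (cPart w c Y j).Nonempty := Finset.card_pos.1 (by omega)
  obtain ⟨hoY, hwo⟩ := Finset.mem_filter.1 ho
  have hmove := hY.min_util_transfer_singleton_le hmin hjk (.inr rfl) hoY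
  rw [hwo, min_le_iff] at hmove
  have hjk' : (c : ℤ) * ((cPart w c Y k).card + 2) ≤ c * (cPart w c Y j).card := by
    gcongr
    exact_mod_cast h
  have hm : c ≤ (mPart w Y j).card := by
    rw [util_eq_cPart_sub_mPart hw Y j, util_eq_cPart_sub_mPart hw Y k] at hmove
    have : (0 : ℤ) < c := by exact_mod_cast hc
    rcases hmove with hmove | hmove <;> zify <;> linarith
  rcases hY.cPart_card_le_of_le_card_mPart hdom hc hjk ⟨o, ho⟩ hm with h' | h' <;> omega

theorem LeximinAux.cPart_card_le_of_forall_le (hY : LeximinAux w Y)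
    (hdom : ∀ Z, LeximinAux w Z → ¬ Dominates w c Z Y) (hc : 0 < c)
    (hw : ∀ o, w o ∈ ({-1, 0, (c : ℤ)} : Set ℤ)) (hmin : ∀ j, util w (Y k) ≤ util w (Y j))
    (hk : ∀ j, j ≤ k) (j : Fin n) : (cPart w c Y k).card ≤ (cPart w c Y j).card := by
  by_contra! h
  have hkj : k ≠ j := by rintro rfl; omega
  have hkj' : (c : ℤ) * ((cPart w c Y j).card + 1) ≤ c * (cPart w c Y k).card := by
    gcongr
    exact_mod_cast h
  have hm : c ≤ (mPart w Y k).card := by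
    have := hmin j
    rw [util_eq_cPart_sub_mPart hw Y j, util_eq_cPart_sub_mPart hw Y k] at this
    zify
    linarith
  rcases hY.cPart_card_le_of_le_card_mPart hdom hc hkj (Finset.card_pos.1 (by omega)) hm
    with h' | ⟨-, h'⟩
  · omega
  · exact (hk j).not_gt h'

end Dominating

theorem sum_card_mPart {α : Type*} [Fintype α] [DecidableEq α] {n : ℕ} {w : α → ℤ}
    {Y : Fin n → Finset α} (hY : CompleteAlloc Y) :
    ∑ j, (mPart w Y j).card = (Finset.univ.filter fun o => w o = -1).card := by
  have hunion : Finset.univ.biUnion (mPart w Y) = Finset.univ.filter fun o => w o = -1 := by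
    rw [← hY.2, Finset.filter_biUnion]
    rfl
  rw [← hunion, Finset.card_biUnion (t := mPart w Y) fun i _ j _ hij =>
    (hY.1 i j hij).mono (Finset.filter_subset _ _) (Finset.filter_subset _ _)]

theorem eq_max_ceil_sum_div_card {ι : Type*} [Fintype ι] (d : ι → ℤ) (k : ι) (h0 : 0 ≤ d k)
    (hle : ∀ j, d j ≤ d k) (hge : 1 ≤ d k → ∀ j, d k - 1 ≤ d j) :
    d k = max ⌈((∑ j, d j : ℤ) : ℚ) / Fintype.card ι⌉ 0 := by
  have hn : (0 : ℚ) < Fintype.card ι := by exact_mod_cast Fintype.card_pos_iff.2 ⟨k⟩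
  have hsum_le : ∑ j, d j ≤ Fintype.card ι * d k := by
    simpa using Finset.sum_le_sum fun j (_ : j ∈ Finset.univ) => hle j
  rcases h0.eq_or_lt with h0 | h1
  · have hsum : ∑ j, d j ≤ 0 := by simpa [← h0] using hsum_le
    rw [← h0, eq_comm, max_eq_right_iff]
    exact Int.ceil_le.2 (div_nonpos_of_nonpos_of_nonneg (by exact_mod_cast hsum) hn.le)
  · have hsum_gt : Fintype.card ι * (d k - 1) < ∑ j, d j := by
      have := Finset.single_le_sum (f := fun j => d j - (d k - 1))
        (fun j _ => by linarith [hge h1 j]) (Finset.mem_univ k)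
      simp only [Finset.sum_sub_distrib, Finset.sum_const, Finset.card_univ, nsmul_eq_mul] at this
      linarith
    have hceil : ⌈((∑ j, d j : ℤ) : ℚ) / Fintype.card ι⌉ = d k := by
      rw [Int.ceil_eq_iff, lt_div_iff₀ hn, div_le_iff₀ hn]
      constructor <;> exact_mod_cast (by linarith)
    rw [hceil, max_eq_left h1.le]

theorem LeximinAux.sum_mul_cPart_card_sub_util {α : Type*} [Fintype α] [DecidableEq α] {n : ℕ}
    {w : α → ℤ} {c : ℕ} {Y : Fin n → Finset α} {k : Fin n} (hY : LeximinAux w Y)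
    (hdom : ∀ Z, LeximinAux w Z → ¬ Dominates w c Z Y) (hc : 0 < c)
    (hw : ∀ o, w o ∈ ({-1, 0, (c : ℤ)} : Set ℤ)) (hmin : ∀ j, util w (Y k) ≤ util w (Y j))
    (hk : ∀ j, j ≤ k) :
    ∑ j, ((c : ℤ) * (cPart w c Y k).card - util w (Y j)) =
      (Finset.univ.filter fun o => w o = -1).card -
        c * (Finset.univ.filter fun j => (cPart w c Y j).card = (cPart w c Y k).card + 1).card := by
  have hterm : ∀ j, (c : ℤ) * (cPart w c Y k).card - util w (Y j) = (mPart w Y j).card -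
      c * if (cPart w c Y j).card = (cPart w c Y k).card + 1 then 1 else 0 := by
    intro j
    have := hY.cPart_card_le_succ hdom hc hw hmin j
    have := hY.cPart_card_le_of_forall_le hdom hc hw hmin hk j
    rw [util_eq_cPart_sub_mPart hw Y j]
    split_ifs with hj
    · rw [hj]; push_cast; ring
    · rw [show (cPart w c Y j).card = (cPart w c Y k).card by omega]; ring
  simp only [hterm, Finset.sum_sub_distrib, ← Finset.mul_sum, Finset.sum_boole,
    ← sum_card_mPart hY.1, Nat.cast_sum]

theorem dominating_leximin_mms_upper_bound_general {α : Type*} [Fintype α] [DecidableEq α]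
    (n : ℕ) (c : ℕ) (hc : 0 < c) (w : α → ℤ)
    (hw : ∀ o, w o ∈ ({-1, 0, (c : ℤ)} : Set ℤ))
    (Y : Fin n → Finset α)
    (hYlex : LeximinAux w Y)
    (hYdom : ∀ Z : Fin n → Finset α, LeximinAux w Z → ¬ Dominates w c Z Y)
    (last : Fin n) (hlast : (last : ℕ) = n - 1)
    (hmin : ∀ j : Fin n, util w (Y last) ≤ util w (Y j))
    (N' : Finset (Fin n))
    (hN' : N' = Finset.univ.filter fun j => (cPart w c Y j).card = (cPart w c Y last).card + 1)
    (ℓ : ℕ) (hℓ : ℓ = (Finset.univ.filter fun o : α => w o = -1).card) :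
    ((mPart w Y last).card : ℤ)
        = max ⌈((((ℓ : ℤ) - (c : ℤ) * N'.card : ℤ)) : ℚ) / (n : ℚ)⌉ 0 ∧
    (∀ P : Fin n → Finset α, CompleteAlloc P →
      ∃ j : Fin n, util w (P j) ≤
        (c : ℤ) * (cPart w c Y last).card
          - max ⌈((((ℓ : ℤ) - (c : ℤ) * N'.card : ℤ)) : ℚ) / (n : ℚ)⌉ 0) := by
  have hu := util_eq_cPart_sub_mPart hw Y last
  have hsum := hYlex.sum_mul_cPart_card_sub_util hYdom hc hw hmin
    (fun j => Fin.le_def.2 (by omega))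
  rw [← hN', ← hℓ] at hsum
  have hm := eq_max_ceil_sum_div_card (fun j => c * (cPart w c Y last).card - util w (Y j)) last
    (by simp [hu]) (fun j => by linarith [hmin j])
    (fun h1 j => by
      linarith [hYlex.util_le_add_one hmin (Finset.card_pos.1 (by simp only [hu] at h1; omega)) j])
  rw [hsum, Fintype.card_fin, hu, sub_sub_cancel] at hm
  exact ⟨hm, fun P hP => (hYlex.exists_util_le hmin hP).imp fun j hj => by rwa [← hm, ← hu]⟩

/-- with `{-1, 0, c}`-additive valuations, let `Y` be a dominating leximin
allocation for the auxiliary instance where all `n` agents share agent `i`'s valuation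
`w`, with the last agent having minimal utility. With `N' = {j : |Y^c_j| = |Y^c_n| + 1}`
and `ℓ` the number of items valued `-1`, we get `|Y^{-1}_n| = max(⌈(ℓ - c|N'|)/n⌉, 0)`,
and the maxmin share is at most `c|Y^c_n| - max(⌈(ℓ - c|N'|)/n⌉, 0)`. -/
theorem dominating_leximin_mms_upper_bound {α : Type*} [Fintype α] [DecidableEq α]
    (n : ℕ) (hn : 0 < n) (c : ℕ) (hc : 0 < c) (w : α → ℤ)
    (hw : ∀ o, w o ∈ ({-1, 0, (c : ℤ)} : Set ℤ))
    (Y : Fin n → Finset α)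
    (hYlex : LeximinAux w Y)
    (hYdom : ∀ Z : Fin n → Finset α, LeximinAux w Z → ¬ Dominates w c Z Y)
    (last : Fin n) (hlast : (last : ℕ) = n - 1)
    (hmin : ∀ j : Fin n, util w (Y last) ≤ util w (Y j))
    (N' : Finset (Fin n))
    (hN' : N' = Finset.univ.filter fun j => (cPart w c Y j).card = (cPart w c Y last).card + 1)
    (ℓ : ℕ) (hℓ : ℓ = (Finset.univ.filter fun o : α => w o = -1).card) :
    ((mPart w Y last).card : ℤ)
        = max ⌈((((ℓ : ℤ) - (c : ℤ) * N'.card : ℤ)) : ℚ) / (n : ℚ)⌉ 0 ∧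
    (∀ P : Fin n → Finset α, CompleteAlloc P →
      ∃ j : Fin n, util w (P j) ≤
        (c : ℤ) * (cPart w c Y last).card
          - max ⌈((((ℓ : ℤ) - (c : ℤ) * N'.card : ℤ)) : ℚ) / (n : ℚ)⌉ 0) :=
  dominating_leximin_mms_upper_bound_general n c hc w hw Y hYlex hYdom last hlast hmin N' hN' ℓ hℓ
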